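/- arXiv:2406.00589 — 3 statements merged into one kernel-verified Lean document; each statement's English description precedes it below -/
import Mathlib

section
/- Let Θ : ℝ → ℝ be a threshold rule, i.e. (1) Θ is nondecreasing; (2) Θ is odd; (3) 0 ≤ Θ(x) ≤ x for all x ≥ 0 and Θ(x) → ∞ as x → ∞; (4) Θ is nonexpansive. Let P(θ) = ∫₀^{|θ|} (Θ⁻¹(u) − u) du with Θ⁻¹(u) = sup{t : Θ(t) ≤ u}. Then for every r ∈ ℝ, Θ(r) is a global minimizer over γ ∈ ℝ of the function γ ↦ ½(r − γ)² + P(γ); that is, ½(r − Θ(r))² + P(Θ(r)) ≤ ½(r − γ)² + P(γ) for all γ ∈ ℝ. -/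
open Filter MeasureTheory


lemma aux_threshold (Θ : ℝ → ℝ) (h1 : Monotone Θ)
    (h2 : ∀ x : ℝ, Θ (-x) = -Θ x)
    (h3 : (∀ x : ℝ, 0 ≤ x → 0 ≤ Θ x ∧ Θ x ≤ x) ∧ Tendsto Θ atTop atTop)
    (r : ℝ) (hr : 0 ≤ r) (γ : ℝ) (hγ : 0 ≤ γ) :
    (1/2) * (r - Θ r)^2 + (∫ u in (0:ℝ)..(Θ r), (sSup {t : ℝ | Θ t ≤ u} - u))
      ≤ (1/2) * (r - γ)^2 + ∫ u in (0:ℝ)..γ, (sSup {t : ℝ | Θ t ≤ u} - u) := by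
  have hΘ0 : Θ 0 = 0 := by have := h2 0; simp at this; linarith
  have hbdd : ∀ u : ℝ, BddAbove {t : ℝ | Θ t ≤ u} := by
    intro u
    obtain ⟨t0, ht0⟩ := (h3.2.eventually_gt_atTop u).exists_forall_of_atTop
    exact ⟨t0, fun t ht => by
      by_contra h
      exact absurd ht (not_le.mpr (ht0 t (le_of_lt (not_le.mp h))))⟩
  have hne : ∀ u : ℝ, 0 ≤ u → Set.Nonempty {t : ℝ | Θ t ≤ u} := fun u hu =>
    ⟨0, by simpa [hΘ0] using hu⟩
  have hmono : ∀ u v : ℝ, 0 ≤ u → u ≤ v →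
      sSup {t : ℝ | Θ t ≤ u} ≤ sSup {t : ℝ | Θ t ≤ v} := fun u v hu huv =>
    csSup_le_csSup (hbdd v) (hne u hu) (fun t ht => le_trans ht huv)
  have hint : ∀ a b : ℝ, 0 ≤ a → 0 ≤ b →
      IntervalIntegrable (fun u => sSup {t : ℝ | Θ t ≤ u} - u) volume a b := by
    intro a b ha hb
    apply IntervalIntegrable.sub
    · apply MonotoneOn.intervalIntegrable
      intro x hx y hy hxy
      exact hmono x y (le_trans (le_min ha hb) hx.1) hxy
    · exact intervalIntegral.intervalIntegrable_id
  have hcont : Continuous (fun u : ℝ => r - u) := continuous_const.sub continuous_id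
  set g := Θ r with hgdef
  have hg0 : 0 ≤ g := (h3.1 r hr).1
  have hgr : g ≤ r := (h3.1 r hr).2
  have hintr : IntervalIntegrable (fun u => r - u) volume g γ :=
    hcont.intervalIntegrable g γ
  have heval : (∫ u in g..γ, (r - u)) = r*(γ - g) - (γ^2 - g^2)/2 := by
    rw [intervalIntegral.integral_sub intervalIntegrable_const
      intervalIntegral.intervalIntegrable_id, intervalIntegral.integral_const,
      integral_id, smul_eq_mul]
    ring
  have hkey : (∫ u in g..γ, (r - u)) ≤ ∫ u in g..γ, (sSup {t : ℝ | Θ t ≤ u} - u) := by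
    rcases le_or_gt g γ with hgγ | hγg
    · apply intervalIntegral.integral_mono_on hgγ hintr (hint g γ hg0 hγ)
      intro u hu
      have : r ≤ sSup {t : ℝ | Θ t ≤ u} := le_csSup (hbdd u) (le_trans hu.1 (le_refl u))
      linarith
    · rw [intervalIntegral.integral_symm, intervalIntegral.integral_symm γ g]
      have hle : (∫ u in γ..g, (sSup {t : ℝ | Θ t ≤ u} - u)) ≤ ∫ u in γ..g, (r - u) := by
        apply intervalIntegral.integral_mono_ae_restrict (le_of_lt hγg)
          (hint γ g hγ hg0) (hcont.intervalIntegrable γ g)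
        have hsing : (volume.restrict (Set.Icc γ g)) {g} = 0 := by
          rw [Measure.restrict_apply (measurableSet_singleton g)]
          exact measure_mono_null Set.inter_subset_left Real.volume_singleton
        have hneg : ∀ᵐ u ∂(volume.restrict (Set.Icc γ g)), u ≠ g := by
          rw [ae_iff]
          convert hsing using 2
          ext u; simp
        filter_upwards [ae_restrict_mem measurableSet_Icc, hneg] with u hu hug
        have hug' : u < g := lt_of_le_of_ne hu.2 hug
        have hu0 : 0 ≤ u := le_trans hγ hu.1
        have : sSup {t : ℝ | Θ t ≤ u} ≤ r := by
          apply csSup_le (hne u hu0)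
          intro t ht
          by_contra h
          exact absurd (le_trans (h1 (le_of_lt (not_le.mp h))) ht) (not_le.mpr hug')
        linarith
      linarith
  have hsplit : (∫ u in (0:ℝ)..g, (sSup {t : ℝ | Θ t ≤ u} - u))
      + (∫ u in g..γ, (sSup {t : ℝ | Θ t ≤ u} - u))
      = ∫ u in (0:ℝ)..γ, (sSup {t : ℝ | Θ t ≤ u} - u) :=
    intervalIntegral.integral_add_adjacent_intervals (hint 0 g le_rfl hg0) (hint g γ hg0 hγ)
  nlinarith [hkey, heval, hsplit]


/-- Threshold–penalty correspondence: for a threshold rule `Θ` with associated penalty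
`P(θ) = ∫₀^{|θ|} (Θ⁻¹(u) − u) du`, `Θ(r)` is a global minimizer of
`γ ↦ ½(r − γ)² + P(γ)`. -/
theorem threshold_rule_prox_minimizer (Θ : ℝ → ℝ)
    (h1 : Monotone Θ)
    (h2 : ∀ x : ℝ, Θ (-x) = -Θ x)
    (h3 : (∀ x : ℝ, 0 ≤ x → 0 ≤ Θ x ∧ Θ x ≤ x) ∧ Tendsto Θ atTop atTop)
    (h4 : ∀ x y : ℝ, |Θ x - Θ y| ≤ |x - y|)
    (P : ℝ → ℝ)
    (hP : ∀ θ : ℝ, P θ = ∫ u in (0 : ℝ)..|θ|, (sSup {t : ℝ | Θ t ≤ u} - u))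
    (r : ℝ) :
    ∀ γ : ℝ, (1 / 2) * (r - Θ r) ^ 2 + P (Θ r) ≤ (1 / 2) * (r - γ) ^ 2 + P γ := by
  intro γ
  rcases le_or_gt 0 r with hr | hr
  · rcases le_or_gt 0 γ with hγ | hγ
    · have hkey := aux_threshold Θ h1 h2 h3 r hr γ hγ
      rw [hP (Θ r), hP γ, abs_of_nonneg (h3.1 r hr).1, abs_of_nonneg hγ]
      linarith
    · have hkey := aux_threshold Θ h1 h2 h3 r hr (-γ) (by linarith)
      rw [hP (Θ r), hP γ, abs_of_nonneg (h3.1 r hr).1, abs_of_neg hγ]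
      nlinarith [mul_nonneg hr (le_of_lt (neg_pos.mpr hγ))]
  · have hr' : 0 ≤ -r := by linarith
    have hΘr : Θ r = -(Θ (-r)) := by have := h2 (-r); rwa [neg_neg] at this
    rcases le_or_gt 0 γ with hγ | hγ
    · have hkey := aux_threshold Θ h1 h2 h3 (-r) hr' γ hγ
      rw [hP (Θ r), hP γ, hΘr, abs_neg, abs_of_nonneg (h3.1 (-r) hr').1,
        abs_of_nonneg hγ]
      nlinarith [mul_nonneg (le_of_lt (neg_pos.mpr hr)) hγ]
    · have hkey := aux_threshold Θ h1 h2 h3 (-r) hr' (-γ) (by linarith)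
      rw [hP (Θ r), hP γ, hΘr, abs_neg, abs_of_nonneg (h3.1 (-r) hr').1, abs_of_neg hγ]
      nlinarith [hkey]
end

section
/- (Theorem 1, ℓ1/soft-threshold case.) Let X be a real n×p matrix, y ∈ ℝⁿ, λ > 0, and η ≥ 0 such that the operator norm of Iₚ − η XᵀX is at most 1. Define F(β, γ) = ½‖y − Xβ − γ‖₂² + λ‖γ‖₁. Given (β, γ) ∈ ℝᵖ × ℝⁿ, set y_adj = y − γ, β' = β − η Xᵀ(Xβ − y_adj), r = y − Xβ', and γ' ∈ ℝⁿ coordinatewise by γ'ᵢ = S_λ(rᵢ), where S_λ(x) = sign(x)·max(|x| − λ, 0). Then F(β, γ) ≥ F(β', γ) ≥ F(β', γ'). -/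
/-!
The gradient step is a descent step for the least-squares part `½‖y − γ − Xβ‖²`, because
`‖Iₚ − η XᵀX‖ ≤ 1` forces `η XᵀX ≤ 2 Iₚ` as quadratic forms, and the smooth objective decreases
along `−η∇` as soon as `η` times the curvature is at most `2`. For fixed `β`, the objective is a
sum over coordinates of `½(rᵢ − γᵢ)² + λ|γᵢ|`, and `S_λ(rᵢ)` minimises each summand.
-/

open Matrix

/-- The soft threshold function `S_λ(x) = sign(x) · max(|x| − λ, 0)`. -/
noncomputable def softThreshold (lam : ℝ) (x : ℝ) : ℝ := Real.sign x * max (|x| - lam) 0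

/-- The IGDTS objective with ℓ1 penalty:
`F(β, γ) = ½‖y − Xβ − γ‖₂² + λ‖γ‖₁`. -/
noncomputable def igdtsObj {n p : ℕ} (X : Matrix (Fin n) (Fin p) ℝ) (y : Fin n → ℝ)
    (lam : ℝ) (β : Fin p → ℝ) (γ : Fin n → ℝ) : ℝ :=
  (1 / 2) * (∑ i, (y i - X.mulVec β i - γ i) ^ 2) + lam * ∑ i, |γ i|

lemma neg_sq_norm_le_inner_of_opNorm_le_one {E : Type*} [NormedAddCommGroup E]
    [InnerProductSpace ℝ E] {T : E →L[ℝ] E} (hT : ‖T‖ ≤ 1) (x : E) :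
    -‖x‖ ^ 2 ≤ inner ℝ x (T x) :=
  calc -‖x‖ ^ 2 = -(‖x‖ * (1 * ‖x‖)) := by ring
    _ ≤ -(‖x‖ * ‖T x‖) := by gcongr; exact T.le_of_opNorm_le hT x
    _ ≤ inner ℝ x (T x) := neg_le_of_abs_le (abs_real_inner_le_norm x (T x))

section LeastSquares

variable {m k : Type*} [Fintype m] [Fintype k] [DecidableEq k]

lemma neg_dotProduct_self_le_dotProduct_mulVec {M : Matrix k k ℝ}
    (hM : ‖toEuclideanCLM (𝕜 := ℝ) M‖ ≤ 1) (v : k → ℝ) :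
    -(v ⬝ᵥ v) ≤ v ⬝ᵥ M *ᵥ v := by
  have h := neg_sq_norm_le_inner_of_opNorm_le_one hM (WithLp.toLp 2 v)
  rwa [inner_toEuclideanCLM, ← real_inner_self_eq_norm_sq, EuclideanSpace.inner_toLp_toLp,
    star_trivial] at h

lemma mul_dotProduct_mulVec_self_le {X : Matrix m k ℝ} {η : ℝ}
    (hop : ‖toEuclideanCLM (𝕜 := ℝ) ((1 : Matrix k k ℝ) - η • (Xᵀ * X))‖ ≤ 1) (v : k → ℝ) :
    η * (X *ᵥ v ⬝ᵥ X *ᵥ v) ≤ 2 * (v ⬝ᵥ v) := by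
  have h := neg_dotProduct_self_le_dotProduct_mulVec hop v
  rw [sub_mulVec, one_mulVec, smul_mulVec, ← mulVec_mulVec, dotProduct_sub, dotProduct_smul,
    dotProduct_mulVec, vecMul_transpose, smul_eq_mul] at h
  linarith

lemma dotProduct_self_sub_mulVec_gradient_step_le {X : Matrix m k ℝ} {η : ℝ} (hη : 0 ≤ η)
    (hop : ‖toEuclideanCLM (𝕜 := ℝ) ((1 : Matrix k k ℝ) - η • (Xᵀ * X))‖ ≤ 1)
    (b : m → ℝ) (β : k → ℝ) :
    (b - X *ᵥ (β - η • Xᵀ *ᵥ (X *ᵥ β - b))) ⬝ᵥ (b - X *ᵥ (β - η • Xᵀ *ᵥ (X *ᵥ β - b)))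
      ≤ (b - X *ᵥ β) ⬝ᵥ (b - X *ᵥ β) := by
  set e := X *ᵥ β - b
  set g := Xᵀ *ᵥ e
  have hres : b - X *ᵥ (β - η • g) = η • X *ᵥ g - e := by
    rw [mulVec_sub, mulVec_smul]; simp only [e]; abel
  have hcross : e ⬝ᵥ X *ᵥ g = g ⬝ᵥ g := by
    rw [dotProduct_mulVec, ← mulVec_transpose, dotProduct_comm]
  have hcurv := mul_le_mul_of_nonneg_left (mul_dotProduct_mulVec_self_le hop g) hη
  have hb : b - X *ᵥ β = -e := by simp only [e, neg_sub]
  rw [hres, hb]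
  -- `‖ηXg − e‖² = ‖e‖² − 2η‖g‖² + η²‖Xg‖²` for the gradient `g = Xᵀe`
  simp only [sub_dotProduct, dotProduct_sub, smul_dotProduct, dotProduct_smul, smul_eq_mul,
    neg_dotProduct, dotProduct_neg, neg_neg, dotProduct_comm (X *ᵥ g) e, hcross]
  linarith

end LeastSquares

lemma isMinOn_softThreshold {lam : ℝ} (hlam : 0 ≤ lam) (x : ℝ) :
    IsMinOn (fun t => (x - t) ^ 2 / 2 + lam * |t|) Set.univ (softThreshold lam x) := by
  intro t _
  simp only [Set.mem_ofPred_eq]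
  rcases le_or_gt |x| lam with hsmall | hlarge
  · have hS : softThreshold lam x = 0 := by
      simp [softThreshold, max_eq_right (sub_nonpos.mpr hsmall)]
    have hxt : x * t ≤ lam * |t| :=
      calc x * t ≤ |x| * |t| := by rw [← abs_mul]; exact le_abs_self _
        _ ≤ lam * |t| := by gcongr
    rw [hS]
    nlinarith [sq_nonneg t]
  · rcases lt_or_gt_of_ne (show x ≠ 0 by rintro rfl; rw [abs_zero] at hlarge; linarith) with hneg | hpos
    · rw [abs_of_neg hneg] at hlarge
      have hS : softThreshold lam x = x + lam := by
        rw [softThreshold, Real.sign_of_neg hneg, abs_of_neg hneg, max_eq_left (by linarith)]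
        ring
      rw [hS, abs_of_nonpos (by linarith)]
      nlinarith [neg_abs_le t, sq_nonneg (x - t + lam)]
    · rw [abs_of_pos hpos] at hlarge
      have hS : softThreshold lam x = x - lam := by
        rw [softThreshold, Real.sign_of_pos hpos, abs_of_pos hpos, max_eq_left (by linarith)]
        ring
      rw [hS, abs_of_nonneg (by linarith)]
      nlinarith [le_abs_self t, sq_nonneg (x - t - lam)]

section Objective

variable {n p : ℕ} (X : Matrix (Fin n) (Fin p) ℝ) (y : Fin n → ℝ) (lam : ℝ)
  (β : Fin p → ℝ) (γ : Fin n → ℝ)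

lemma igdtsObj_eq_dotProduct : igdtsObj X y lam β γ =
    (y - γ - X *ᵥ β) ⬝ᵥ (y - γ - X *ᵥ β) / 2 + lam * ∑ i, |γ i| := by
  simp only [igdtsObj, dotProduct, Pi.sub_apply, sub_right_comm _ (γ _), ← sq]
  ring

lemma igdtsObj_eq_sum : igdtsObj X y lam β γ =
    ∑ i, (((y - X *ᵥ β) i - γ i) ^ 2 / 2 + lam * |γ i|) := by
  simp only [igdtsObj, Finset.sum_add_distrib, Finset.mul_sum, Pi.sub_apply]
  congr 1
  exact Finset.sum_congr rfl fun i _ => by ring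

end Objective

/-- Theorem 1 (ℓ1 / soft-threshold case): one IGDTS iteration — a gradient step on `β`
followed by coordinatewise soft thresholding of the new residual — does not increase
the objective: `F(β, γ) ≥ F(β', γ) ≥ F(β', γ')`. -/
theorem igdts_descent_soft (n p : ℕ)
    (X : Matrix (Fin n) (Fin p) ℝ) (y : Fin n → ℝ)
    (lam : ℝ) (hlam : 0 < lam) (η : ℝ) (hη : 0 ≤ η)
    (hop : ‖Matrix.toEuclideanCLM (𝕜 := ℝ)
        ((1 : Matrix (Fin p) (Fin p) ℝ) - η • (Xᵀ * X))‖ ≤ 1)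
    (β : Fin p → ℝ) (γ : Fin n → ℝ)
    (yadj : Fin n → ℝ) (hyadj : yadj = y - γ)
    (β' : Fin p → ℝ) (hβ' : β' = β - η • (Xᵀ.mulVec (X.mulVec β - yadj)))
    (r : Fin n → ℝ) (hr : r = y - X.mulVec β')
    (γ' : Fin n → ℝ) (hγ' : ∀ i, γ' i = softThreshold lam (r i)) :
    igdtsObj X y lam β' γ ≤ igdtsObj X y lam β γ ∧
      igdtsObj X y lam β' γ' ≤ igdtsObj X y lam β' γ := by
  constructor
  · rw [igdtsObj_eq_dotProduct, igdtsObj_eq_dotProduct, hβ', ← hyadj]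
    gcongr
    exact dotProduct_self_sub_mulVec_gradient_step_le hη hop yadj β
  · rw [igdtsObj_eq_sum, igdtsObj_eq_sum, ← hr]
    refine Finset.sum_le_sum fun i _ => ?_
    rw [hγ' i]
    exact isMinOn_softThreshold hlam.le (r i) (Set.mem_univ (γ i))
end

section
/- (Theorem 1, general threshold rules.) Let X be a real n×p matrix, y ∈ ℝⁿ, and η ≥ 0 such that the operator norm of Iₚ − η XᵀX is at most 1. For each i = 1,…,n let Θᵢ : ℝ → ℝ be a threshold rule — (1) nondecreasing; (2) odd; (3) 0 ≤ Θᵢ(x) ≤ x for x ≥ 0 and Θᵢ(x) → ∞ as x → ∞; (4) nonexpansive — and let Pᵢ(θ) = ∫₀^{|θ|} (Θᵢ⁻¹(u) − u) du with Θᵢ⁻¹(u) = sup{t : Θᵢ(t) ≤ u}. Define F(β, γ) = ½‖y − Xβ − γ‖₂² + Σᵢ Pᵢ(γᵢ). Given (β, γ), set y_adj = y − γ, β' = β − η Xᵀ(Xβ − y_adj), r = y − Xβ', and γ'ᵢ = Θᵢ(rᵢ) for each i. Then F(β, γ) ≥ F(β', γ) ≥ F(β', γ'); in particular, the sequence of objective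 values produced by the IGDTS iteration is nonincreasing. -/
/-!
The gradient step: write `e = y - Xβ - γ` and `v = Xᵀe`. The new residual is `e - ηXv`, and
`‖e - ηXv‖² = ‖e‖² - 2η‖v‖² + η²‖Xv‖²`, while `‖I - ηXᵀX‖ ≤ 1` gives `⟪v, (I - ηXᵀX)v⟫ ≥ -‖v‖²`,
i.e. `η‖Xv‖² ≤ 2‖v‖²`.

The thresholding step: `Θ r` minimizes `g ↦ ½(r - g)² + P g`, coordinatewise. By oddness we may
take `r ≥ 0`, and then, as `P g = P |g|`, also `g ≥ 0`. The difference of this function at `g`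
and at `Θ r` is `∫_{Θ r}^{g} (Θ⁻¹ u - r) du`, which is nonnegative because `Θ⁻¹ u ≥ r` for
`u ≥ Θ r` and `Θ⁻¹ u ≤ r` for `0 ≤ u < Θ r`.
-/

open Matrix Filter Set MeasureTheory intervalIntegral

lemma intervalIntegral_nonneg_of_sign_change {f : ℝ → ℝ} {a b : ℝ}
    (hright : ∀ u ∈ Icc a b, 0 ≤ f u) (hleft : ∀ u ∈ Ico b a, f u ≤ 0) :
    0 ≤ ∫ u in a..b, f u := by
  rcases le_total a b with hab | hba
  · exact integral_nonneg hab hright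
  · rw [integral_symm, integral_of_le hba, ← integral_Icc_eq_integral_Ioc,
      integral_Icc_eq_integral_Ico, neg_nonneg]
    exact setIntegral_nonpos measurableSet_Ico hleft

noncomputable def thresholdInv (Θ : ℝ → ℝ) (u : ℝ) : ℝ := sSup {t : ℝ | Θ t ≤ u}

noncomputable def thresholdPenalty (Θ : ℝ → ℝ) (θ : ℝ) : ℝ :=
  ∫ u in (0 : ℝ)..|θ|, (thresholdInv Θ u - u)

@[simp]
lemma thresholdPenalty_neg (Θ : ℝ → ℝ) (θ : ℝ) :
    thresholdPenalty Θ (-θ) = thresholdPenalty Θ θ := by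
  rw [thresholdPenalty, thresholdPenalty, abs_neg]

@[simp]
lemma thresholdPenalty_abs (Θ : ℝ → ℝ) (θ : ℝ) :
    thresholdPenalty Θ |θ| = thresholdPenalty Θ θ := by
  rw [thresholdPenalty, thresholdPenalty, abs_abs]

section ThresholdRule

variable {Θ : ℝ → ℝ}

lemma bddAbove_setOf_le_of_tendsto (hΘ : Tendsto Θ atTop atTop) (u : ℝ) :
    BddAbove {t | Θ t ≤ u} := by
  obtain ⟨T, hT⟩ := eventually_atTop.mp (hΘ.eventually_gt_atTop u)
  exact ⟨T, fun t ht => le_of_not_gt fun hTt => (hT t hTt.le).not_ge ht⟩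

lemma le_thresholdInv (hΘ : Tendsto Θ atTop atTop) {r u : ℝ} (h : Θ r ≤ u) :
    r ≤ thresholdInv Θ u :=
  le_csSup (bddAbove_setOf_le_of_tendsto hΘ u) h

lemma thresholdInv_le (hmono : Monotone Θ) (hshrink : ∀ x, 0 ≤ x → Θ x ≤ x) {r u : ℝ}
    (hu : 0 ≤ u) (h : u < Θ r) : thresholdInv Θ u ≤ r :=
  csSup_le ⟨u, hshrink u hu⟩ fun _ ht =>
    le_of_not_gt fun hrt => (h.trans_le (hmono hrt.le)).not_ge ht

lemma monotoneOn_thresholdInv (hΘ : Tendsto Θ atTop atTop) (hshrink : ∀ x, 0 ≤ x → Θ x ≤ x) :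
    MonotoneOn (thresholdInv Θ) (Ici 0) := fun a ha _ _ hab =>
  csSup_le_csSup (bddAbove_setOf_le_of_tendsto hΘ _) ⟨a, hshrink a ha⟩ fun _ ht => le_trans ht hab

lemma intervalIntegrable_thresholdInv (hΘ : Tendsto Θ atTop atTop)
    (hshrink : ∀ x, 0 ≤ x → Θ x ≤ x) {a b : ℝ} (ha : 0 ≤ a) (hb : 0 ≤ b) :
    IntervalIntegrable (thresholdInv Θ) volume a b :=
  ((monotoneOn_thresholdInv hΘ hshrink).mono fun _ hx =>
    le_trans (le_inf ha hb) hx.1).intervalIntegrable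

lemma half_sq_add_thresholdPenalty_le_of_nonneg (hmono : Monotone Θ)
    (hΘ : Tendsto Θ atTop atTop) (hshrink : ∀ x, 0 ≤ x → 0 ≤ Θ x ∧ Θ x ≤ x)
    {r g : ℝ} (hr : 0 ≤ r) (hg : 0 ≤ g) :
    1 / 2 * (r - Θ r) ^ 2 + thresholdPenalty Θ (Θ r)
      ≤ 1 / 2 * (r - g) ^ 2 + thresholdPenalty Θ g := by
  have hΘr := (hshrink r hr).1
  have hle : ∀ x, 0 ≤ x → Θ x ≤ x := fun x hx => (hshrink x hx).2
  have hint : ∀ {a b : ℝ}, 0 ≤ a → 0 ≤ b →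
      IntervalIntegrable (fun u => thresholdInv Θ u - u) volume a b := fun ha hb =>
    (intervalIntegrable_thresholdInv hΘ hle ha hb).sub intervalIntegrable_id
  have hquad : ∫ u in Θ r..g, (u - r) = 1 / 2 * (r - g) ^ 2 - 1 / 2 * (r - Θ r) ^ 2 := by
    simp only [integral_sub intervalIntegrable_id intervalIntegrable_const, integral_id,
      intervalIntegral.integral_const, smul_eq_mul]
    ring
  have hpen : thresholdPenalty Θ g - thresholdPenalty Θ (Θ r)
      = ∫ u in Θ r..g, (thresholdInv Θ u - u) := by
    rw [thresholdPenalty, thresholdPenalty, abs_of_nonneg hg, abs_of_nonneg hΘr]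
    exact integral_interval_sub_left (hint le_rfl hg) (hint le_rfl hΘr)
  have hsplit : ∫ u in Θ r..g, (thresholdInv Θ u - r)
      = (∫ u in Θ r..g, (thresholdInv Θ u - u)) + ∫ u in Θ r..g, (u - r) := by
    rw [← integral_add (hint hΘr hg) (intervalIntegrable_id.sub intervalIntegrable_const)]
    simp only [sub_add_sub_cancel]
  have hgap : 0 ≤ ∫ u in Θ r..g, (thresholdInv Θ u - r) :=
    intervalIntegral_nonneg_of_sign_change
      (fun u hu => sub_nonneg.2 (le_thresholdInv hΘ hu.1))
      (fun u hu => sub_nonpos.2 (thresholdInv_le hmono hle (hg.trans hu.1) hu.2))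
  linarith

lemma half_sq_add_thresholdPenalty_le (hmono : Monotone Θ) (hodd : ∀ x, Θ (-x) = -Θ x)
    (hΘ : Tendsto Θ atTop atTop) (hshrink : ∀ x, 0 ≤ x → 0 ≤ Θ x ∧ Θ x ≤ x) (r g : ℝ) :
    1 / 2 * (r - Θ r) ^ 2 + thresholdPenalty Θ (Θ r)
      ≤ 1 / 2 * (r - g) ^ 2 + thresholdPenalty Θ g := by
  wlog hr : 0 ≤ r generalizing r g
  · have hneg := this (-r) (-g) (by linarith)
    have hsq : ∀ a b : ℝ, (-a - -b) ^ 2 = (a - b) ^ 2 := fun a b => by ring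
    simpa only [hodd, thresholdPenalty_neg, hsq] using hneg
  have hsq : (r - |g|) ^ 2 ≤ (r - g) ^ 2 := by
    have h := abs_abs_sub_abs_le_abs_sub r g
    rw [abs_of_nonneg hr] at h
    exact sq_le_sq.2 h
  calc 1 / 2 * (r - Θ r) ^ 2 + thresholdPenalty Θ (Θ r)
      ≤ 1 / 2 * (r - |g|) ^ 2 + thresholdPenalty Θ |g| :=
        half_sq_add_thresholdPenalty_le_of_nonneg hmono hΘ hshrink hr (abs_nonneg g)
    _ ≤ 1 / 2 * (r - g) ^ 2 + thresholdPenalty Θ g := by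
        rw [thresholdPenalty_abs]
        gcongr

end ThresholdRule

lemma neg_dotProduct_self_le_dotProduct_mulVec_s11 {p : Type*} [Fintype p] [DecidableEq p]
    {A : Matrix p p ℝ} (hA : ‖toEuclideanCLM (𝕜 := ℝ) A‖ ≤ 1) (v : p → ℝ) :
    -(v ⬝ᵥ v) ≤ v ⬝ᵥ A *ᵥ v := by
  set u := WithLp.toLp 2 v
  have hAu : ‖toEuclideanCLM (𝕜 := ℝ) A u‖ ≤ ‖u‖ :=
    by simpa using (toEuclideanCLM (𝕜 := ℝ) A).le_of_opNorm_le hA u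
  have hcs : -(‖u‖ * ‖u‖) ≤ inner ℝ u (toEuclideanCLM (𝕜 := ℝ) A u) :=
    neg_le_of_abs_le ((abs_real_inner_le_norm _ _).trans (by gcongr))
  have hnorm : ‖u‖ * ‖u‖ = v ⬝ᵥ v := by
    rw [← real_inner_self_eq_norm_mul_norm, EuclideanSpace.inner_eq_star_dotProduct]
    simp [u]
  rw [hnorm, toEuclideanCLM_toLp] at hcs
  simpa [u, EuclideanSpace.inner_eq_star_dotProduct, dotProduct_comm] using hcs

lemma dotProduct_self_sub_gradient_step_le {m p : Type*} [Fintype m] [Fintype p] [DecidableEq p]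
    (X : Matrix m p ℝ) {η : ℝ} (hη : 0 ≤ η)
    (hop : ‖toEuclideanCLM (𝕜 := ℝ) (1 - η • (Xᵀ * X) : Matrix p p ℝ)‖ ≤ 1) (e : m → ℝ) :
    (e - η • X *ᵥ Xᵀ *ᵥ e) ⬝ᵥ (e - η • X *ᵥ Xᵀ *ᵥ e) ≤ e ⬝ᵥ e := by
  generalize hv : Xᵀ *ᵥ e = v
  have hcurv : η * (X *ᵥ v ⬝ᵥ X *ᵥ v) ≤ 2 * (v ⬝ᵥ v) := by
    have h := neg_dotProduct_self_le_dotProduct_mulVec_s11 hop v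
    rw [sub_mulVec, one_mulVec, smul_mulVec, ← mulVec_mulVec, dotProduct_sub, dotProduct_smul,
      dotProduct_mulVec v Xᵀ, vecMul_transpose, smul_eq_mul] at h
    linarith
  have hcross : e ⬝ᵥ X *ᵥ v = v ⬝ᵥ v := by
    rw [dotProduct_mulVec, ← mulVec_transpose, hv]
  have hexp : (e - η • X *ᵥ v) ⬝ᵥ (e - η • X *ᵥ v)
      = e ⬝ᵥ e - 2 * η * (v ⬝ᵥ v) + η * (η * (X *ᵥ v ⬝ᵥ X *ᵥ v)) := by
    simp only [sub_dotProduct, dotProduct_sub, smul_dotProduct, dotProduct_smul, smul_eq_mul,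
      hcross, dotProduct_comm (X *ᵥ v) e]
    ring
  rw [hexp]
  linarith [mul_le_mul_of_nonneg_left hcurv hη]

theorem igdts_descent_general_general (n p : ℕ)
    (X : Matrix (Fin n) (Fin p) ℝ) (y : Fin n → ℝ)
    (η : ℝ) (hη : 0 ≤ η)
    (hop : ‖Matrix.toEuclideanCLM (𝕜 := ℝ)
        ((1 : Matrix (Fin p) (Fin p) ℝ) - η • (Xᵀ * X))‖ ≤ 1)
    (Θ : Fin n → ℝ → ℝ)
    (h1 : ∀ i, Monotone (Θ i))
    (h2 : ∀ i, ∀ x : ℝ, Θ i (-x) = -Θ i x)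
    (h3 : ∀ i, (∀ x : ℝ, 0 ≤ x → 0 ≤ Θ i x ∧ Θ i x ≤ x) ∧ Tendsto (Θ i) atTop atTop)
    (P : Fin n → ℝ → ℝ)
    (hP : ∀ i, ∀ θ : ℝ, P i θ = ∫ u in (0 : ℝ)..|θ|, (sSup {t : ℝ | Θ i t ≤ u} - u))
    (F : (Fin p → ℝ) → (Fin n → ℝ) → ℝ)
    (hF : ∀ β γ, F β γ = (1 / 2) * (∑ i, (y i - X.mulVec β i - γ i) ^ 2) + ∑ i, P i (γ i))
    (β : Fin p → ℝ) (γ : Fin n → ℝ)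
    (yadj : Fin n → ℝ) (hyadj : yadj = y - γ)
    (β' : Fin p → ℝ) (hβ' : β' = β - η • (Xᵀ.mulVec (X.mulVec β - yadj)))
    (r : Fin n → ℝ) (hr : r = y - X.mulVec β')
    (γ' : Fin n → ℝ) (hγ' : ∀ i, γ' i = Θ i (r i)) :
    F β' γ ≤ F β γ ∧ F β' γ' ≤ F β' γ := by
  have hloss : ∀ b g, F b g = 1 / 2 * ((y - X *ᵥ b - g) ⬝ᵥ (y - X *ᵥ b - g)) + ∑ i, P i (g i) := by
    intro b g
    simp only [hF, dotProduct, sq, Pi.sub_apply]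
  have hresid : y - X *ᵥ (β - η • Xᵀ *ᵥ (X *ᵥ β - (y - γ))) - γ
      = (y - X *ᵥ β - γ) - η • X *ᵥ Xᵀ *ᵥ (y - X *ᵥ β - γ) := by
    rw [mulVec_sub, mulVec_smul, show X *ᵥ β - (y - γ) = -(y - X *ᵥ β - γ) by abel,
      mulVec_neg, mulVec_neg]
    module
  constructor
  · rw [hloss, hloss, hβ', hyadj, hresid]
    gcongr
    exact dotProduct_self_sub_gradient_step_le X hη hop _
  · have hres : ∀ i, y i - (X *ᵥ β') i = r i := fun i => by rw [hr]; rfl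
    simp only [hF, hres, hγ', Finset.mul_sum, ← Finset.sum_add_distrib]
    have hpen : ∀ i θ, P i θ = thresholdPenalty (Θ i) θ := hP
    simp only [hpen]
    exact Finset.sum_le_sum fun i _ =>
      half_sq_add_thresholdPenalty_le (h1 i) (h2 i) (h3 i).2 (h3 i).1 _ _

/-- Theorem 1 (general threshold rules): for coordinatewise threshold rules `Θᵢ` with
associated penalties `Pᵢ(θ) = ∫₀^{|θ|} (Θᵢ⁻¹(u) − u) du`, one IGDTS iteration — a
gradient step on `β` followed by coordinatewise thresholding of the new residual —
does not increase the objective `F(β, γ) = ½‖y − Xβ − γ‖₂² + Σᵢ Pᵢ(γᵢ)`: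
`F(β, γ) ≥ F(β', γ) ≥ F(β', γ')`. -/
theorem igdts_descent_general (n p : ℕ)
    (X : Matrix (Fin n) (Fin p) ℝ) (y : Fin n → ℝ)
    (η : ℝ) (hη : 0 ≤ η)
    (hop : ‖Matrix.toEuclideanCLM (𝕜 := ℝ)
        ((1 : Matrix (Fin p) (Fin p) ℝ) - η • (Xᵀ * X))‖ ≤ 1)
    (Θ : Fin n → ℝ → ℝ)
    (h1 : ∀ i, Monotone (Θ i))
    (h2 : ∀ i, ∀ x : ℝ, Θ i (-x) = -Θ i x)
    (h3 : ∀ i, (∀ x : ℝ, 0 ≤ x → 0 ≤ Θ i x ∧ Θ i x ≤ x) ∧ Tendsto (Θ i) atTop atTop)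
    (h4 : ∀ i, ∀ x z : ℝ, |Θ i x - Θ i z| ≤ |x - z|)
    (P : Fin n → ℝ → ℝ)
    (hP : ∀ i, ∀ θ : ℝ, P i θ = ∫ u in (0 : ℝ)..|θ|, (sSup {t : ℝ | Θ i t ≤ u} - u))
    (F : (Fin p → ℝ) → (Fin n → ℝ) → ℝ)
    (hF : ∀ β γ, F β γ = (1 / 2) * (∑ i, (y i - X.mulVec β i - γ i) ^ 2) + ∑ i, P i (γ i))
    (β : Fin p → ℝ) (γ : Fin n → ℝ)
    (yadj : Fin n → ℝ) (hyadj : yadj = y - γ)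
    (β' : Fin p → ℝ) (hβ' : β' = β - η • (Xᵀ.mulVec (X.mulVec β - yadj)))
    (r : Fin n → ℝ) (hr : r = y - X.mulVec β')
    (γ' : Fin n → ℝ) (hγ' : ∀ i, γ' i = Θ i (r i)) :
    F β' γ ≤ F β γ ∧ F β' γ' ≤ F β' γ :=
  igdts_descent_general_general n p X y η hη hop Θ h1 h2 h3 P hP F hF β γ yadj hyadj β' hβ' r hr γ'
    hγ'
end
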